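/- arXiv:math/0404044 — 4 statements merged into one kernel-verified Lean document; each statement's English description precedes it below -/
import Mathlib

section
/- Let μ be a probability measure on ℝ, n ≥ 1, and D ⊆ ℝⁿ Borel. Define Ψ(b₁,...,bₙ; D) for positive reals bᵢ recursively by Ψ(b; D) = μ(D)^b for n=1 and Ψ(b₁,...,bₙ; D) = (∫ Ψ(b₂/b₁,...,bₙ/b₁; D/x₁) dμ(x₁))^{b₁}, where D/x₁ = {(x₂,...,xₙ) : (x₁,...,xₙ) ∈ D}. Then Ψ(b₁,...,bₙ; D) is nonincreasing in each of its n arguments. -/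
open MeasureTheory ProbabilityTheory Filter Finset

/-- The recursively defined path-probability function `Ψ` for spherically
symmetric trees, extended to positive real generation sizes:
`Ψ(b; D) = μ(D)^b` and
`Ψ(b₁,…,bₙ; D) = (∫ Ψ(b₂/b₁,…,bₙ/b₁; D/x₁) dμ(x₁))^{b₁}`. -/
noncomputable def Psi (μ : Measure ℝ) : (n : ℕ) → (Fin (n + 1) → ℝ) → Set (Fin (n + 1) → ℝ) → ℝ
  | 0, b, D => (μ {x | (fun _ : Fin 1 => x) ∈ D}).toReal ^ (b 0)
  | n + 1, b, D =>
      (∫ x, Psi μ n (fun i => b i.succ / b 0) {y | Fin.cons x y ∈ D} ∂μ) ^ (b 0)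

lemma psi_nonneg (μ : Measure ℝ) :
    ∀ (n : ℕ) (b : Fin (n + 1) → ℝ) (D : Set (Fin (n + 1) → ℝ)), 0 ≤ Psi μ n b D
  | 0, b, D => Real.rpow_nonneg ENNReal.toReal_nonneg _
  | n + 1, b, D =>
      Real.rpow_nonneg (integral_nonneg fun x => psi_nonneg μ n _ _) _

/-- Joint measurability of `Ψ` applied to sections of a measurable set. -/
lemma psi_measurable (μ : Measure ℝ) [SFinite μ] (n : ℕ) :
    ∀ (b : Fin (n + 1) → ℝ), (∀ i, 0 ≤ b i) → ∀ {α : Type} [MeasurableSpace α]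
      (E : Set (α × (Fin (n + 1) → ℝ))), MeasurableSet E →
      Measurable (fun x : α => Psi μ n b {y | (x, y) ∈ E}) := by
  induction n with
  | zero =>
    intro b hb α _ E hE
    have hmap : Measurable (fun p : α × ℝ => (p.1, fun _ : Fin 1 => p.2)) :=
      measurable_fst.prodMk (measurable_pi_lambda _ fun _ => measurable_snd)
    have hE2 : MeasurableSet ((fun p : α × ℝ => (p.1, fun _ : Fin 1 => p.2)) ⁻¹' E) :=
      hmap hE
    have h := measurable_measure_prodMk_left (ν := μ) hE2
    show Measurable fun x : α => (μ {t : ℝ | (x, fun _ : Fin 1 => t) ∈ E}).toReal ^ b 0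
    exact (Real.continuous_rpow_const (hb 0)).measurable.comp h.ennreal_toReal
  | succ n ih =>
    intro b hb α _ E hE
    set E' : Set ((α × ℝ) × (Fin (n + 1) → ℝ)) :=
      {p | (p.1.1, Fin.cons p.1.2 p.2) ∈ E} with hE'def
    have hmap : Measurable (fun p : (α × ℝ) × (Fin (n + 1) → ℝ) =>
        ((p.1.1, Fin.cons p.1.2 p.2) : α × (Fin (n + 2) → ℝ))) := by
      refine (measurable_fst.fst).prodMk (measurable_pi_iff.mpr fun i => ?_)
      refine Fin.cases ?_ (fun k => ?_) i
      · simpa using measurable_fst.snd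
      · simp only [Fin.cons_succ]; exact (measurable_pi_apply k).comp measurable_snd
    have hE' : MeasurableSet E' := hmap hE
    have hG : Measurable (fun q : α × ℝ =>
        Psi μ n (fun i => b i.succ / b 0) {z | (q, z) ∈ E'}) :=
      ih _ (fun i => div_nonneg (hb i.succ) (hb 0)) E' hE'
    have hInt : Measurable (fun x : α =>
        ∫ t, Psi μ n (fun i => b i.succ / b 0) {z | ((x, t), z) ∈ E'} ∂μ) :=
      (hG.stronglyMeasurable.integral_prod_right').measurable
    show Measurable fun x : α =>
      (∫ t, Psi μ n (fun i => b i.succ / b 0) {y | Fin.cons t y ∈ {y | (x, y) ∈ E}} ∂μ) ^ b 0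
    exact (Real.continuous_rpow_const (hb 0)).measurable.comp hInt

lemma psi_le_one (μ : Measure ℝ) [IsProbabilityMeasure μ] :
    ∀ (n : ℕ) (b : Fin (n + 1) → ℝ) (D : Set (Fin (n + 1) → ℝ)), MeasurableSet D →
      (∀ i, 0 ≤ b i) → Psi μ n b D ≤ 1 := by
  intro n
  induction n with
  | zero =>
    intro b D hD hb
    refine Real.rpow_le_one ENNReal.toReal_nonneg ?_ (hb 0)
    have := prob_le_one (μ := μ) (s := {x | (fun _ : Fin 1 => x) ∈ D})
    simpa using ENNReal.toReal_mono ENNReal.one_ne_top this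
  | succ n ih =>
    intro b D hD hb
    have hsec : ∀ x : ℝ, MeasurableSet {y | Fin.cons x y ∈ D} := by
      intro x
      have hmap : Measurable (fun y : Fin (n + 1) → ℝ => (Fin.cons x y : Fin (n + 2) → ℝ)) := by
        refine measurable_pi_iff.mpr fun i => ?_
        refine Fin.cases ?_ (fun k => ?_) i
        · simpa using measurable_const
        · simpa using measurable_pi_apply k
      exact hmap hD
    have hbnd : ∀ x : ℝ, Psi μ n (fun i => b i.succ / b 0) {y | Fin.cons x y ∈ D} ≤ 1 := by
      intro x
      exact ih _ _ (hsec x) fun i => div_nonneg (hb i.succ) (hb 0)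
    refine Real.rpow_le_one (integral_nonneg fun x => psi_nonneg μ n _ _) ?_ (hb 0)
    calc (∫ x, Psi μ n (fun i => b i.succ / b 0) {y | Fin.cons x y ∈ D} ∂μ)
        ≤ ∫ _, (1 : ℝ) ∂μ := by
          refine integral_mono_of_nonneg (Eventually.of_forall fun x => psi_nonneg μ n _ _)
            (integrable_const 1) (Eventually.of_forall hbnd)
      _ = 1 := by simp

/-- Measurability of the section integrand. -/
lemma psi_measurable_section (μ : Measure ℝ) [SFinite μ]
    (n : ℕ) (b : Fin (n + 1) → ℝ) (hb : ∀ i, 0 ≤ b i)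
    (D : Set (Fin (n + 2) → ℝ)) (hD : MeasurableSet D) :
    Measurable (fun x : ℝ => Psi μ n b {y | Fin.cons x y ∈ D}) := by
  have hE : MeasurableSet {p : ℝ × (Fin (n + 1) → ℝ) | Fin.cons p.1 p.2 ∈ D} := by
    have hmap : Measurable (fun p : ℝ × (Fin (n + 1) → ℝ) =>
        (Fin.cons p.1 p.2 : Fin (n + 2) → ℝ)) := by
      refine measurable_pi_iff.mpr fun i => ?_
      refine Fin.cases ?_ (fun k => ?_) i
      · simpa using measurable_fst
      · simp only [Fin.cons_succ]; exact (measurable_pi_apply k).comp measurable_snd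
    exact hmap hD
  exact psi_measurable μ n b hb {p : ℝ × (Fin (n + 1) → ℝ) | Fin.cons p.1 p.2 ∈ D} hE

/-- Integrability of the section integrand. -/
lemma psi_integrable_section (μ : Measure ℝ) [IsProbabilityMeasure μ]
    (n : ℕ) (b : Fin (n + 1) → ℝ) (hb : ∀ i, 0 ≤ b i)
    (D : Set (Fin (n + 2) → ℝ)) (hD : MeasurableSet D) :
    Integrable (fun x : ℝ => Psi μ n b {y | Fin.cons x y ∈ D}) μ := by
  have hmeas : Measurable (fun x : ℝ => Psi μ n b {y | Fin.cons x y ∈ D}) :=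
    psi_measurable_section μ n b hb D hD
  have hsec : ∀ x : ℝ, MeasurableSet {y | Fin.cons x y ∈ D} := by
    intro x
    have hmap : Measurable (fun y : Fin (n + 1) → ℝ => (Fin.cons x y : Fin (n + 2) → ℝ)) := by
      refine measurable_pi_iff.mpr fun i => ?_
      refine Fin.cases ?_ (fun k => ?_) i
      · simpa using measurable_const
      · simpa using measurable_pi_apply k
    exact hmap hD
  refine ⟨hmeas.aestronglyMeasurable, ?_⟩
  refine HasFiniteIntegral.of_bounded (C := 1) (Eventually.of_forall fun x => ?_)
  rw [Real.norm_eq_abs, abs_of_nonneg (psi_nonneg μ n _ _)]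
  exact psi_le_one μ n b _ (hsec x) hb

/-- Scaling: `Ψ(c·b; D) = Ψ(b; D)^c`. -/
lemma psi_smul (μ : Measure ℝ) :
    ∀ (n : ℕ) (b : Fin (n + 1) → ℝ) (D : Set (Fin (n + 1) → ℝ)) (c : ℝ), c ≠ 0 →
      Psi μ n (fun i => c * b i) D = Psi μ n b D ^ c := by
  intro n
  induction n with
  | zero =>
    intro b D c hc
    show (μ {x | (fun _ : Fin 1 => x) ∈ D}).toReal ^ (c * b 0)
      = ((μ {x | (fun _ : Fin 1 => x) ∈ D}).toReal ^ b 0) ^ c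
    rw [mul_comm, Real.rpow_mul ENNReal.toReal_nonneg]
  | succ n ih =>
    intro b D c hc
    show (∫ x, Psi μ n (fun i => (c * b i.succ) / (c * b 0)) {y | Fin.cons x y ∈ D} ∂μ)
          ^ (c * b 0)
      = ((∫ x, Psi μ n (fun i => b i.succ / b 0) {y | Fin.cons x y ∈ D} ∂μ) ^ b 0) ^ c
    have hr : (fun i : Fin (n + 1) => (c * b i.succ) / (c * b 0))
        = fun i => b i.succ / b 0 := by
      funext i; exact mul_div_mul_left _ _ hc
    rw [hr, mul_comm,
      Real.rpow_mul (integral_nonneg fun x => psi_nonneg μ n _ _)]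

/-- Jensen's inequality for concave power functions. -/
lemma jensen_rpow (μ : Measure ℝ) [IsProbabilityMeasure μ] {g : ℝ → ℝ} {θ : ℝ}
    (hg : Integrable g μ) (hgθ : Integrable (fun x => g x ^ θ) μ)
    (h0 : ∀ x, 0 ≤ g x) (hθ0 : 0 ≤ θ) (hθ1 : θ ≤ 1) :
    ∫ x, (g x) ^ θ ∂μ ≤ (∫ x, g x ∂μ) ^ θ := by
  have hconc : ConcaveOn ℝ (Set.Ici 0) (fun x : ℝ => x ^ θ) :=
    Real.concaveOn_rpow hθ0 hθ1
  exact hconc.le_map_integral (Real.continuous_rpow_const hθ0).continuousOn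
    isClosed_Ici (Eventually.of_forall h0) hg hgθ

/-- `Ψ(b₁,…,bₙ; D)` is nonincreasing in each of its `n` arguments. -/
theorem psi_antitone_in_each_argument (μ : Measure ℝ) [IsProbabilityMeasure μ]
    (n : ℕ) (D : Set (Fin (n + 1) → ℝ)) (hD : MeasurableSet D)
    (b : Fin (n + 1) → ℝ) (hb : ∀ i, 0 < b i)
    (j : Fin (n + 1)) (b' : ℝ) (hb' : 0 < b') (hle : b j ≤ b') :
    Psi μ n (Function.update b j b') D ≤ Psi μ n b D := by
  induction n generalizing b' with
  | zero =>
    have hj : j = 0 := Fin.eq_zero j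
    subst hj
    show (μ {x | (fun _ : Fin 1 => x) ∈ D}).toReal ^ (Function.update b 0 b' 0)
      ≤ (μ {x | (fun _ : Fin 1 => x) ∈ D}).toReal ^ b 0
    rw [Function.update_self]
    set t := (μ {x | (fun _ : Fin 1 => x) ∈ D}).toReal with ht
    have ht1 : t ≤ 1 := by
      have := prob_le_one (μ := μ) (s := {x | (fun _ : Fin 1 => x) ∈ D})
      simpa [ht] using ENNReal.toReal_mono ENNReal.one_ne_top this
    rcases eq_or_lt_of_le (ENNReal.toReal_nonneg : (0:ℝ) ≤ t) with h0 | h0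
    · rw [← ht] at h0
      rw [← h0, Real.zero_rpow (ne_of_gt hb'), Real.zero_rpow (ne_of_gt (hb 0))]
    · rw [← ht] at h0
      exact Real.rpow_le_rpow_of_exponent_ge h0 ht1 hle
  | succ n ih =>
    -- section measurability
    have hsec : ∀ x : ℝ, MeasurableSet {y | Fin.cons x y ∈ D} := by
      intro x
      have hmap : Measurable (fun y : Fin (n + 1) → ℝ => (Fin.cons x y : Fin (n + 2) → ℝ)) := by
        refine measurable_pi_iff.mpr fun i => ?_
        refine Fin.cases ?_ (fun k => ?_) i
        · simpa using measurable_const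
        · simpa using measurable_pi_apply k
      exact hmap hD
    induction j using Fin.cases with
    | zero =>
      -- monotonicity in the first argument, via scaling + Jensen
      have hb0 : (0:ℝ) < b 0 := hb 0
      set θ := b 0 / b' with hθ
      have hθ0 : 0 < θ := div_pos hb0 hb'
      have hθ1 : θ ≤ 1 := (div_le_one hb').mpr hle
      set g : ℝ → ℝ := fun x => Psi μ n (fun i => b i.succ / b 0) {y | Fin.cons x y ∈ D}
        with hg
      have hgint : Integrable g μ :=
        psi_integrable_section μ n _ (fun i => (div_pos (hb i.succ) hb0).le) D hD
      have hgθint : Integrable (fun x => g x ^ θ) μ := by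
        have hgmeas : Measurable g :=
          psi_measurable_section μ n _ (fun i => (div_pos (hb i.succ) hb0).le) D hD
        refine ⟨((Real.continuous_rpow_const hθ0.le).measurable.comp
          hgmeas).aestronglyMeasurable, ?_⟩
        refine HasFiniteIntegral.of_bounded (C := 1) (Eventually.of_forall fun x => ?_)
        rw [Real.norm_eq_abs, abs_of_nonneg (Real.rpow_nonneg (psi_nonneg μ n _ _) _)]
        exact Real.rpow_le_one (psi_nonneg μ n _ _)
          (psi_le_one μ n _ _ (hsec x) fun i => (div_pos (hb i.succ) hb0).le) hθ0.le
      have harg : (fun i : Fin (n + 1) => Function.update b 0 b' i.succ / b')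
          = fun i => θ * (b i.succ / b 0) := by
        funext i
        rw [Function.update_of_ne (Fin.succ_ne_zero i)]
        rw [hθ]; field_simp
      show (∫ x, Psi μ n (fun i => Function.update b 0 b' i.succ / Function.update b 0 b' 0)
          {y | Fin.cons x y ∈ D} ∂μ) ^ (Function.update b 0 b' 0)
        ≤ (∫ x, Psi μ n (fun i => b i.succ / b 0) {y | Fin.cons x y ∈ D} ∂μ) ^ b 0
      rw [Function.update_self, harg]
      have hscale : ∀ x : ℝ, Psi μ n (fun i => θ * (b i.succ / b 0)) {y | Fin.cons x y ∈ D}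
          = g x ^ θ := fun x => psi_smul μ n _ _ θ (ne_of_gt hθ0)
      simp only [hscale]
      have hjensen : ∫ x, g x ^ θ ∂μ ≤ (∫ x, g x ∂μ) ^ θ :=
        jensen_rpow μ hgint hgθint (fun x => psi_nonneg μ n _ _) hθ0.le hθ1
      calc (∫ x, g x ^ θ ∂μ) ^ b'
          ≤ ((∫ x, g x ∂μ) ^ θ) ^ b' :=
            Real.rpow_le_rpow (integral_nonneg fun x => Real.rpow_nonneg
              (psi_nonneg μ n _ _) _) hjensen hb'.le
        _ = (∫ x, g x ∂μ) ^ (θ * b') := by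
            rw [← Real.rpow_mul (integral_nonneg fun x => psi_nonneg μ n _ _)]
        _ = (∫ x, g x ∂μ) ^ b 0 := by
            rw [hθ, div_mul_cancel₀ _ (ne_of_gt hb')]
    | succ i =>
      -- monotonicity in a later argument, via the inductive hypothesis
      have hb0 : (0:ℝ) < b 0 := hb 0
      have h0 : Function.update b i.succ b' 0 = b 0 :=
        Function.update_of_ne (Fin.succ_ne_zero i).symm _ _
      have harg : (fun k : Fin (n + 1) => Function.update b i.succ b' k.succ / b 0)
          = Function.update (fun k => b k.succ / b 0) i (b' / b 0) := by
        funext k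
        by_cases hk : k = i
        · subst hk; rw [Function.update_self, Function.update_self]
        · rw [Function.update_of_ne hk,
            Function.update_of_ne (fun h => hk (Fin.succ_injective _ h))]
      show (∫ x, Psi μ n (fun k => Function.update b i.succ b' k.succ
          / Function.update b i.succ b' 0) {y | Fin.cons x y ∈ D} ∂μ)
          ^ (Function.update b i.succ b' 0)
        ≤ (∫ x, Psi μ n (fun k => b k.succ / b 0) {y | Fin.cons x y ∈ D} ∂μ) ^ b 0
      rw [h0, harg]
      have hmono : ∀ x : ℝ,
          Psi μ n (Function.update (fun k => b k.succ / b 0) i (b' / b 0))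
            {y | Fin.cons x y ∈ D}
          ≤ Psi μ n (fun k => b k.succ / b 0) {y | Fin.cons x y ∈ D} := by
        intro x
        refine ih {y | Fin.cons x y ∈ D} (hsec x) (fun k => b k.succ / b 0)
          (fun k => div_pos (hb k.succ) hb0) i (b' / b 0) (div_pos hb' hb0) ?_
        exact div_le_div_of_nonneg_right hle hb0.le |>.trans_eq rfl
      have hint1 : Integrable (fun x =>
          Psi μ n (Function.update (fun k => b k.succ / b 0) i (b' / b 0))
            {y | Fin.cons x y ∈ D}) μ := by
        refine psi_integrable_section μ n _ (fun k => ?_) D hD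
        by_cases hk : k = i
        · subst hk; rw [Function.update_self]; exact (div_pos hb' hb0).le
        · rw [Function.update_of_ne hk]; exact (div_pos (hb k.succ) hb0).le
      have hint2 : Integrable (fun x =>
          Psi μ n (fun k => b k.succ / b 0) {y | Fin.cons x y ∈ D}) μ :=
        psi_integrable_section μ n _ (fun k => (div_pos (hb k.succ) hb0).le) D hD
      refine Real.rpow_le_rpow (integral_nonneg fun x => psi_nonneg μ n _ _) ?_ hb0.le
      exact integral_mono hint1 hint2 hmono
end

section
/- For any tree Γ of height n with |Γₙ| = k, with i.i.d. vertex labels of law μ and Borel B ⊆ ℝⁿ: 1 − P(B; Γ) ≥ (1 − μⁿ(B))^k, where P(B; Γ) is the probability that some root-to-leaf path has label sequence in B. -/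
open MeasureTheory ProbabilityTheory Filter Finset

/-- The nonroot vertices of the height-`n` tree whose set of depth-`n` vertices
(leaves, identified with their address lists) is `A`: all nonempty prefixes of leaves. -/
def verts (n : ℕ) (A : Finset (List ℕ)) : Finset (List ℕ) :=
  A.biUnion fun a => (Finset.range n).image fun i => a.take (i + 1)

lemma take_mem_verts {n : ℕ} {A : Finset (List ℕ)} {a : List ℕ} (ha : a ∈ A)
    {i : ℕ} (hi : i < n) : a.take (i + 1) ∈ verts n A :=
  Finset.mem_biUnion.2 ⟨a, ha, Finset.mem_image.2 ⟨i, Finset.mem_range.2 hi, rfl⟩⟩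

/-- `P(B; Γ)`: with i.i.d. labels of law `μ` on the vertices, the probability that
some root-to-leaf path of the tree with leaf set `A` has label sequence in `B`. -/
noncomputable def pathProb (μ : Measure ℝ) (n : ℕ) (A : Finset (List ℕ))
    (B : Set (Fin n → ℝ)) : ℝ :=
  ((Measure.pi fun _ : ↥(verts n A) => μ)
    {ω | ∃ a, ∃ ha : a ∈ A,
      (fun i : Fin n => ω ⟨a.take (i.val + 1), take_mem_verts ha i.isLt⟩) ∈ B}).toReal

/-- `φ(T; D)`: the probability that every root-to-leaf path has label sequence in `D`. -/
noncomputable def allPathProb (μ : Measure ℝ) (n : ℕ) (A : Finset (List ℕ))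
    (D : Set (Fin n → ℝ)) : ℝ :=
  ((Measure.pi fun _ : ↥(verts n A) => μ)
    {ω | ∀ a, ∀ ha : a ∈ A,
      (fun i : Fin n => ω ⟨a.take (i.val + 1), take_mem_verts ha i.isLt⟩) ∈ D}).toReal


/-! ### Auxiliary machinery -/

/-- The event that all root-to-leaf paths have label sequence in `D`. -/
def allE (n : ℕ) (A : Finset (List ℕ)) (D : Set (Fin n → ℝ)) : Set (↥(verts n A) → ℝ) :=
  {ω | ∀ a, ∀ ha : a ∈ A,
      (fun i : Fin n => ω ⟨a.take (i.val + 1), take_mem_verts ha i.isLt⟩) ∈ D}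

lemma mem_verts_iff {n : ℕ} {A : Finset (List ℕ)} {v : List ℕ} :
    v ∈ verts n A ↔ ∃ a ∈ A, ∃ i < n, v = a.take (i + 1) := by
  simp [verts, eq_comm]

lemma mem_verts_union {n : ℕ} {A₁ A₂ : Finset (List ℕ)} {v : List ℕ} :
    v ∈ verts n (A₁ ∪ A₂) ↔ v ∈ verts n A₁ ∨ v ∈ verts n A₂ := by
  simp only [mem_verts_iff, Finset.mem_union]
  constructor
  · rintro ⟨a, (h | h), hi⟩
    exacts [Or.inl ⟨a, h, hi⟩, Or.inr ⟨a, h, hi⟩]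
  · rintro (⟨a, h, hi⟩ | ⟨a, h, hi⟩)
    exacts [⟨a, Or.inl h, hi⟩, ⟨a, Or.inr h, hi⟩]

lemma eq_cons_of_ne_nil {a : List ℕ} (h : a ≠ []) : a = a.headI :: a.tail := by
  cases a with
  | nil => exact absurd rfl h
  | cons x t => rfl

lemma headI_take {a : List ℕ} (h : a ≠ []) (i : ℕ) : (a.take (i + 1)).headI = a.headI := by
  cases a with
  | nil => exact absurd rfl h
  | cons x t => simp

lemma measurableSet_allE {n : ℕ} {A : Finset (List ℕ)} {D : Set (Fin n → ℝ)}
    (hD : MeasurableSet D) : MeasurableSet (allE n A D) := by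
  have : allE n A D = ⋂ x : {a // a ∈ A},
      (fun (ω : ↥(verts n A) → ℝ) (i : Fin n) =>
        ω ⟨x.1.take (i.val + 1), take_mem_verts x.2 i.isLt⟩) ⁻¹' D := by
    ext ω
    simp [allE, Set.mem_iInter, Subtype.forall]
  rw [this]
  exact MeasurableSet.iInter fun x =>
    (measurable_pi_lambda _ fun i => measurable_pi_apply _) hD

lemma lintegral_pow_le' {α : Type*} [MeasurableSpace α] {μ : Measure α} [IsProbabilityMeasure μ]
    {g : α → ENNReal} (hg : Measurable g) (k : ℕ) :
    (∫⁻ x, g x ∂μ) ^ k ≤ ∫⁻ x, (g x) ^ k ∂μ := by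
  rcases Nat.eq_zero_or_pos k with rfl | hk
  · simp
  have hk1 : (1:ℝ) ≤ (k:ℝ) := by exact_mod_cast hk
  have key := ENNReal.lintegral_mul_norm_pow_le (μ := μ)
    (f := fun x => (g x) ^ k) (g := fun _ => (1:ENNReal))
    ((hg.pow_const k).aemeasurable) aemeasurable_const
    (p := (k:ℝ)⁻¹) (q := 1 - (k:ℝ)⁻¹)
    (by positivity) (by rw [sub_nonneg]; exact inv_le_one_of_one_le₀ hk1) (by ring)
  have hinv : ∀ x : α, ((g x) ^ k) ^ ((k:ℝ)⁻¹) = g x := by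
    intro x
    rw [← ENNReal.rpow_natCast (g x) k, ← ENNReal.rpow_mul,
      mul_inv_cancel₀ (by positivity), ENNReal.rpow_one]
  simp only [hinv, ENNReal.one_rpow, mul_one, lintegral_one, measure_univ] at key
  calc (∫⁻ x, g x ∂μ) ^ k ≤ ((∫⁻ x, (g x) ^ k ∂μ) ^ ((k:ℝ)⁻¹)) ^ k :=
        pow_le_pow_left' key k
    _ = ∫⁻ x, (g x) ^ k ∂μ := by
        rw [← ENNReal.rpow_natCast _ k, ← ENNReal.rpow_mul,
          inv_mul_cancel₀ (by positivity : (k:ℝ) ≠ 0), ENNReal.rpow_one]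

lemma measure_allE_union (μ : Measure ℝ) [IsProbabilityMeasure μ]
    (n : ℕ) (D : Set (Fin n → ℝ)) (hD : MeasurableSet D)
    (A A₁ A₂ : Finset (List ℕ)) (hA : A = A₁ ∪ A₂)
    (hdisj : Disjoint (verts n A₁) (verts n A₂)) :
    (Measure.pi fun _ : ↥(verts n A) => μ) (allE n A D)
      = (Measure.pi fun _ : ↥(verts n A₁) => μ) (allE n A₁ D)
        * (Measure.pi fun _ : ↥(verts n A₂) => μ) (allE n A₂ D) := by
  classical
  subst hA
  set p : ↥(verts n (A₁ ∪ A₂)) → Prop := fun v => (v : List ℕ) ∈ verts n A₁ with hp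
  let e₁ : ↥(verts n A₁) ≃ {v : ↥(verts n (A₁ ∪ A₂)) // p v} :=
    { toFun := fun w => ⟨⟨w.1, mem_verts_union.2 (Or.inl w.2)⟩, w.2⟩
      invFun := fun v => ⟨v.1.1, v.2⟩
      left_inv := fun w => rfl
      right_inv := fun v => Subtype.ext (Subtype.ext rfl) }
  let e₂ : ↥(verts n A₂) ≃ {v : ↥(verts n (A₁ ∪ A₂)) // ¬ p v} :=
    { toFun := fun w => ⟨⟨w.1, mem_verts_union.2 (Or.inr w.2)⟩,
        fun hw => Finset.disjoint_left.1 hdisj hw w.2⟩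
      invFun := fun v => ⟨v.1.1, (mem_verts_union.1 v.1.2).resolve_left v.2⟩
      left_inv := fun w => rfl
      right_inv := fun v => Subtype.ext (Subtype.ext rfl) }
  set G₁ : Set ({v : ↥(verts n (A₁ ∪ A₂)) // p v} → ℝ) :=
    (MeasurableEquiv.piCongrLeft (fun _ => ℝ) e₁).symm ⁻¹' (allE n A₁ D) with hG₁
  set G₂ : Set ({v : ↥(verts n (A₁ ∪ A₂)) // ¬ p v} → ℝ) :=
    (MeasurableEquiv.piCongrLeft (fun _ => ℝ) e₂).symm ⁻¹' (allE n A₂ D) with hG₂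
  have hmG₁ : MeasurableSet G₁ :=
    (MeasurableEquiv.piCongrLeft (fun _ => ℝ) e₁).symm.measurable (measurableSet_allE hD)
  have hmG₂ : MeasurableSet G₂ :=
    (MeasurableEquiv.piCongrLeft (fun _ => ℝ) e₂).symm.measurable (measurableSet_allE hD)
  have happly₁ : ∀ (σ : {v : ↥(verts n (A₁ ∪ A₂)) // p v} → ℝ) w,
      (MeasurableEquiv.piCongrLeft (fun _ => ℝ) e₁).symm σ w = σ (e₁ w) := fun σ w => rfl
  have happly₂ : ∀ (σ : {v : ↥(verts n (A₁ ∪ A₂)) // ¬ p v} → ℝ) w,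
      (MeasurableEquiv.piCongrLeft (fun _ => ℝ) e₂).symm σ w = σ (e₂ w) := fun σ w => rfl
  have key : allE n (A₁ ∪ A₂) D =
      (MeasurableEquiv.piEquivPiSubtypeProd (fun _ : ↥(verts n (A₁ ∪ A₂)) => ℝ) p) ⁻¹'
        (G₁ ×ˢ G₂) := by
    ext ω
    simp only [Set.mem_preimage, Set.mem_prod, hG₁, hG₂, allE, Set.mem_setOf_eq]
    constructor
    · intro h
      refine ⟨fun a ha => ?_, fun a ha => ?_⟩
      · exact h a (Finset.mem_union_left _ ha)
      · exact h a (Finset.mem_union_right _ ha)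
    · rintro ⟨h₁, h₂⟩ a ha
      rcases Finset.mem_union.1 ha with h | h
      · exact h₁ a h
      · exact h₂ a h
  have m₁ : (Measure.pi fun _ : {v : ↥(verts n (A₁ ∪ A₂)) // p v} => μ) G₁
      = (Measure.pi fun _ : ↥(verts n A₁) => μ) (allE n A₁ D) :=
    MeasurePreserving.measure_preimage
      (MeasurePreserving.symm (MeasurableEquiv.piCongrLeft (fun _ => ℝ) e₁)
        (measurePreserving_piCongrLeft (fun _ : {v : ↥(verts n (A₁ ∪ A₂)) // p v} => μ) e₁))
      (measurableSet_allE hD).nullMeasurableSet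
  have m₂ : (Measure.pi fun _ : {v : ↥(verts n (A₁ ∪ A₂)) // ¬ p v} => μ) G₂
      = (Measure.pi fun _ : ↥(verts n A₂) => μ) (allE n A₂ D) :=
    MeasurePreserving.measure_preimage
      (MeasurePreserving.symm (MeasurableEquiv.piCongrLeft (fun _ => ℝ) e₂)
        (measurePreserving_piCongrLeft (fun _ : {v : ↥(verts n (A₁ ∪ A₂)) // ¬ p v} => μ) e₂))
      (measurableSet_allE hD).nullMeasurableSet
  rw [key,
    (measurePreserving_piEquivPiSubtypeProd (fun _ : ↥(verts n (A₁ ∪ A₂)) => μ) p).measure_preimage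
      ((hmG₁.prod hmG₂).nullMeasurableSet),
    Measure.prod_prod, m₁, m₂]

def consF {n : ℕ} (x : ℝ) : (Fin n → ℝ) → (Fin (n + 1) → ℝ) := fun y => Fin.cons x y

lemma measurable_finCons {n : ℕ} :
    Measurable (fun z : ℝ × (Fin n → ℝ) => (Fin.cons z.1 z.2 : Fin (n + 1) → ℝ)) := by
  refine measurable_pi_lambda _ fun j => ?_
  induction j using Fin.cases with
  | zero => simpa using measurable_fst
  | succ i =>
    simp only [Fin.cons_succ]
    exact (measurable_pi_apply i).comp measurable_snd

/-- The joint event used for conditioning on the root-child label. -/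
def consE (n : ℕ) (T : Finset (List ℕ)) (D : Set (Fin (n + 1) → ℝ)) :
    Set (ℝ × (↥(verts n T) → ℝ)) :=
  {z | ∀ t, ∀ ht : t ∈ T, (Fin.cons z.1
      (fun i : Fin n => z.2 ⟨t.take (i.val + 1), take_mem_verts ht i.isLt⟩) : Fin (n+1) → ℝ) ∈ D}

lemma measurableSet_consE {n : ℕ} {T : Finset (List ℕ)} {D : Set (Fin (n + 1) → ℝ)}
    (hD : MeasurableSet D) : MeasurableSet (consE n T D) := by
  have : consE n T D = ⋂ x : {t // t ∈ T},
      (fun z : ℝ × (↥(verts n T) → ℝ) => (Fin.cons z.1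
        (fun i : Fin n => z.2 ⟨x.1.take (i.val + 1), take_mem_verts x.2 i.isLt⟩)
          : Fin (n+1) → ℝ)) ⁻¹' D := by
    ext z
    simp [consE, Set.mem_iInter, Subtype.forall]
  rw [this]
  refine MeasurableSet.iInter fun x => ?_
  have : Measurable (fun z : ℝ × (↥(verts n T) → ℝ) =>
      ((z.1, fun i : Fin n => z.2 ⟨x.1.take (i.val + 1), take_mem_verts x.2 i.isLt⟩)
        : ℝ × (Fin n → ℝ))) :=
    measurable_fst.prodMk
      (measurable_pi_lambda _ fun i => (measurable_pi_apply _).comp measurable_snd)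
  exact (measurable_finCons.comp this) hD

lemma prodMk_preimage_consE {n : ℕ} {T : Finset (List ℕ)} {D : Set (Fin (n + 1) → ℝ)} (x : ℝ) :
    Prod.mk x ⁻¹' consE n T D = allE n T (consF x ⁻¹' D) := rfl

lemma lintegral_eval_pi {ι : Type*} [Fintype ι] (μ : Measure ℝ) [IsProbabilityMeasure μ]
    (v₀ : ι) (huniq : ∀ w : ι, w = v₀) (F : ℝ → ENNReal) (hF : Measurable F) :
    ∫⁻ σ : ι → ℝ, F (σ v₀) ∂(Measure.pi fun _ : ι => μ) = ∫⁻ x, F x ∂μ := by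
  have hmap : Measure.map (fun σ : ι → ℝ => σ v₀) (Measure.pi fun _ : ι => μ) = μ := by
    refine Measure.ext fun s hs => ?_
    rw [Measure.map_apply (measurable_pi_apply v₀) hs]
    have hpre : (fun σ : ι → ℝ => σ v₀) ⁻¹' s = Set.pi Set.univ (fun _ => s) := by
      ext σ
      simp only [Set.mem_preimage, Set.mem_pi, Set.mem_univ, forall_true_left]
      constructor
      · intro h w
        rw [huniq w]; exact h
      · intro h
        exact h v₀
    rw [hpre, Measure.pi_pi]
    have : (Finset.univ : Finset ι) = {v₀} :=
      Finset.eq_singleton_iff_unique_mem.2 ⟨Finset.mem_univ _, fun w _ => huniq w⟩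
    rw [this, Finset.prod_singleton]
  conv_rhs => rw [← hmap]
  rw [lintegral_map hF (measurable_pi_apply _)]

lemma measure_allE_singleHead (μ : Measure ℝ) [IsProbabilityMeasure μ]
    (n : ℕ) (D : Set (Fin (n + 1) → ℝ)) (hD : MeasurableSet D)
    (A : Finset (List ℕ)) (hne : A.Nonempty) (hlen : ∀ a ∈ A, a.length = n + 1)
    (c : ℕ) (hc : ∀ a ∈ A, a.headI = c)
    (T : Finset (List ℕ)) (hT : T = A.image List.tail) :
    (Measure.pi fun _ : ↥(verts (n + 1) A) => μ) (allE (n + 1) A D)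
      = ∫⁻ x, (Measure.pi fun _ : ↥(verts n T) => μ) (allE n T (consF x ⁻¹' D)) ∂μ := by
  classical
  have ha_ne : ∀ a ∈ A, a ≠ [] := fun a ha h => by
    simpa [h] using hlen a ha
  have ha_cons : ∀ a ∈ A, a = c :: a.tail := fun a ha => by
    conv_lhs => rw [eq_cons_of_ne_nil (ha_ne a ha)]
    rw [hc a ha]
  obtain ⟨a₀, ha₀⟩ := hne
  have mem_c : [c] ∈ verts (n + 1) A := by
    have := take_mem_verts ha₀ (Nat.succ_pos n)
    rwa [show a₀.take (0 + 1) = [c] by rw [ha_cons a₀ ha₀]; rfl] at this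
  -- facts about vertices
  have hv_all : ∀ v ∈ verts (n + 1) A, v ≠ [] ∧ v.headI = c := by
    intro v hv
    obtain ⟨a, ha, i, hi, rfl⟩ := mem_verts_iff.1 hv
    constructor
    · rw [ha_cons a ha]; simp
    · rw [ha_cons a ha]; simp [List.take_succ_cons]
  have cons_take_mem : ∀ t ∈ T, ∀ i, i < n → (c :: t.take (i + 1)) ∈ verts (n + 1) A := by
    intro t ht i hi
    rw [hT] at ht
    obtain ⟨a, ha, rfl⟩ := Finset.mem_image.1 ht
    have : c :: a.tail.take (i + 1) = a.take ((i + 1) + 1) := by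
      conv_rhs => rw [ha_cons a ha]
      rw [List.take_succ_cons]
    rw [this]
    exact take_mem_verts ha (by omega)
  have cons_mem : ∀ v ∈ verts n T, (c :: v) ∈ verts (n + 1) A ∧ c :: v ≠ [c] := by
    intro v hv
    obtain ⟨t, ht, i, hi, rfl⟩ := mem_verts_iff.1 hv
    refine ⟨cons_take_mem t ht i hi, ?_⟩
    intro h
    have htne : t ≠ [] := by
      rw [hT] at ht
      obtain ⟨a, ha, rfl⟩ := Finset.mem_image.1 ht
      have := hlen a ha
      intro h'
      rw [ha_cons a ha] at this
      simp [h'] at this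
      omega
    have : t.take (i + 1) = [] := by simpa using h
    rw [List.take_eq_nil_iff] at this
    tauto
  have tail_mem : ∀ v, v ∈ verts (n + 1) A → v ≠ [c] → v.tail ∈ verts n T := by
    intro v hv hvc
    obtain ⟨a, ha, i, hi, rfl⟩ := mem_verts_iff.1 hv
    rcases Nat.eq_zero_or_pos i with rfl | hpos
    · exfalso; apply hvc
      rw [ha_cons a ha]; rfl
    · obtain ⟨j, rfl⟩ := Nat.exists_eq_add_of_lt hpos
      rw [ha_cons a ha, show 0 + j + 1 + 1 = (j + 1) + 1 by omega, List.take_succ_cons]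
      have : a.tail ∈ T := hT ▸ Finset.mem_image_of_mem _ ha
      exact take_mem_verts this (by omega)
  set p : ↥(verts (n + 1) A) → Prop := fun v => (v : List ℕ) = [c] with hp
  let v₀ : {v : ↥(verts (n + 1) A) // p v} := ⟨⟨[c], mem_c⟩, rfl⟩
  have huniq : ∀ w : {v : ↥(verts (n + 1) A) // p v}, w = v₀ :=
    fun w => Subtype.ext (Subtype.ext w.2)
  let e₂ : ↥(verts n T) ≃ {v : ↥(verts (n + 1) A) // ¬ p v} :=
    { toFun := fun w => ⟨⟨c :: w.1, (cons_mem w.1 w.2).1⟩, (cons_mem w.1 w.2).2⟩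
      invFun := fun v => ⟨(v.1 : List ℕ).tail, tail_mem v.1.1 v.1.2 v.2⟩
      left_inv := fun w => Subtype.ext rfl
      right_inv := fun v => Subtype.ext (Subtype.ext (by
        have h1 := (hv_all v.1.1 v.1.2).1
        have h2 := (hv_all v.1.1 v.1.2).2
        conv_rhs => rw [eq_cons_of_ne_nil h1]
        rw [h2])) }
  set S' : Set (({v : ↥(verts (n + 1) A) // p v} → ℝ) × ({v : ↥(verts (n + 1) A) // ¬ p v} → ℝ)) :=
    {z | ∀ t, ∀ ht : t ∈ T, (Fin.cons (z.1 v₀)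
      (fun i : Fin n => z.2 (e₂ ⟨t.take (i.val + 1), take_mem_verts ht i.isLt⟩))
        : Fin (n+1) → ℝ) ∈ D} with hS'def
  have hS' : MeasurableSet S' := by
    have : S' = ⋂ x : {t // t ∈ T}, (fun z : ({v : ↥(verts (n + 1) A) // p v} → ℝ) ×
            ({v : ↥(verts (n + 1) A) // ¬ p v} → ℝ) => (Fin.cons (z.1 v₀)
          (fun i : Fin n => z.2 (e₂ ⟨x.1.take (i.val + 1), take_mem_verts x.2 i.isLt⟩))
            : Fin (n+1) → ℝ)) ⁻¹' D := by
      ext z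
      simp only [hS'def, Set.mem_setOf_eq, Set.mem_iInter, Set.mem_preimage, Subtype.forall]
    rw [this]
    refine MeasurableSet.iInter fun x => ?_
    have : Measurable (fun z : ({v : ↥(verts (n + 1) A) // p v} → ℝ) ×
        ({v : ↥(verts (n + 1) A) // ¬ p v} → ℝ) =>
        ((z.1 v₀, fun i : Fin n =>
          z.2 (e₂ ⟨x.1.take (i.val + 1), take_mem_verts x.2 i.isLt⟩)) : ℝ × (Fin n → ℝ))) :=
      ((measurable_pi_apply _).comp measurable_fst).prodMk
        (measurable_pi_lambda _ fun i => (measurable_pi_apply _).comp measurable_snd)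
    exact (measurable_finCons.comp this) hD
  -- the path function identity
  have hfun : ∀ (ω : ↥(verts (n + 1) A) → ℝ) (a : List ℕ) (ha : a ∈ A) (ht : a.tail ∈ T),
      (Fin.cons (ω ⟨[c], mem_c⟩)
          (fun i : Fin n => ω ⟨c :: a.tail.take (i.val + 1),
            (cons_mem _ (take_mem_verts ht i.isLt)).1⟩) : Fin (n+1) → ℝ)
          = fun j : Fin (n + 1) => ω ⟨a.take (j.val + 1), take_mem_verts ha j.isLt⟩ := by
    intro ω a ha ht
    funext j
    induction j using Fin.cases with
    | zero =>
      rw [Fin.cons_zero]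
      refine congrArg ω (Subtype.ext ?_)
      show [c] = List.take ((0 : Fin (n+1)).val + 1) a
      rw [ha_cons a ha]
      simp
    | succ i =>
      rw [Fin.cons_succ]
      refine congrArg ω (Subtype.ext ?_)
      show c :: a.tail.take (i.val + 1) = List.take ((i.succ : Fin (n+1)).val + 1) a
      rw [Fin.val_succ]
      conv_rhs => rw [ha_cons a ha]
      rw [List.take_succ_cons]
  -- step 1 : the event is the preimage of S'
  have key : allE (n + 1) A D =
      (MeasurableEquiv.piEquivPiSubtypeProd (fun _ : ↥(verts (n + 1) A) => ℝ) p) ⁻¹' S' := by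
    ext ω
    simp only [Set.mem_preimage, hS'def, allE, Set.mem_setOf_eq]
    constructor
    · intro h t ht
      obtain ⟨a, ha, rfl⟩ : ∃ a ∈ A, a.tail = t := by
        rw [hT] at ht; simpa using Finset.mem_image.1 ht
      show (Fin.cons (ω ⟨[c], mem_c⟩)
          (fun i : Fin n => ω ⟨c :: a.tail.take (i.val + 1),
            (cons_mem _ (take_mem_verts ht i.isLt)).1⟩) : Fin (n+1) → ℝ) ∈ D
      rw [hfun ω a ha ht]
      exact h a ha
    · intro h a ha
      have ht : a.tail ∈ T := hT ▸ Finset.mem_image_of_mem _ ha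
      have h' : (Fin.cons (ω ⟨[c], mem_c⟩)
          (fun i : Fin n => ω ⟨c :: a.tail.take (i.val + 1),
            (cons_mem _ (take_mem_verts ht i.isLt)).1⟩) : Fin (n+1) → ℝ) ∈ D := h a.tail ht
      rw [hfun ω a ha ht] at h'
      exact h'
  -- step 2: compute the measure
  rw [key,
    (measurePreserving_piEquivPiSubtypeProd (fun _ : ↥(verts (n + 1) A) => μ) p).measure_preimage
      hS'.nullMeasurableSet,
    Measure.prod_apply hS']
  -- step 3: identify sections
  have hsec : ∀ σ : {v : ↥(verts (n + 1) A) // p v} → ℝ,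
      (Measure.pi fun _ : {v : ↥(verts (n + 1) A) // ¬ p v} => μ) (Prod.mk σ ⁻¹' S')
        = (Measure.pi fun _ : ↥(verts n T) => μ) (allE n T (consF (σ v₀) ⁻¹' D)) := by
    intro σ
    have hsec_eq : Prod.mk σ ⁻¹' S'
        = (MeasurableEquiv.piCongrLeft (fun _ => ℝ) e₂).symm ⁻¹'
            (allE n T (consF (σ v₀) ⁻¹' D)) := rfl
    rw [hsec_eq]
    exact MeasurePreserving.measure_preimage
      (MeasurePreserving.symm (MeasurableEquiv.piCongrLeft (fun _ => ℝ) e₂)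
        (measurePreserving_piCongrLeft (fun _ : {v : ↥(verts (n + 1) A) // ¬ p v} => μ) e₂))
      (measurableSet_allE (hD.preimage (measurable_finCons.comp measurable_prodMk_left))).nullMeasurableSet
  simp only [hsec]
  -- step 4: change of variables along evaluation at v₀
  have hF : Measurable (fun x : ℝ =>
      (Measure.pi fun _ : ↥(verts n T) => μ) (allE n T (consF x ⁻¹' D))) := by
    have : ∀ x : ℝ, allE n T (consF x ⁻¹' D) = Prod.mk x ⁻¹' consE n T D :=
      fun x => (prodMk_preimage_consE x).symm
    simp only [this]
    exact measurable_measure_prodMk_left (measurableSet_consE hD)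
  exact lintegral_eval_pi μ v₀ huniq
    (fun x => (Measure.pi fun _ : ↥(verts n T) => μ) (allE n T (consF x ⁻¹' D))) hF

lemma pi_succ_eq (μ : Measure ℝ) [IsProbabilityMeasure μ] (n : ℕ)
    (D : Set (Fin (n + 1) → ℝ)) (hD : MeasurableSet D) :
    (Measure.pi fun _ : Fin (n + 1) => μ) D
      = ∫⁻ x, (Measure.pi fun _ : Fin n => μ) (consF x ⁻¹' D) ∂μ := by
  have mp := (measurePreserving_piFinSuccAbove (fun _ : Fin (n + 1) => μ) 0)
  have mps := MeasurePreserving.symm _ mp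
  rw [← mps.measure_preimage hD.nullMeasurableSet]
  have hsymm : ∀ (x : ℝ) (y : Fin n → ℝ),
      (MeasurableEquiv.piFinSuccAbove (fun _ : Fin (n + 1) => ℝ) 0).symm (x, y) = consF x y := by
    intro x y
    simp [MeasurableEquiv.piFinSuccAbove, consF, Fin.insertNth_zero', Fin.consEquiv]
  rw [Measure.prod_apply (mps.measurable hD)]
  refine lintegral_congr fun x => ?_
  congr 1
  ext y
  simp only [Set.mem_preimage, hsymm]

/-- The key inequality: for any tree of height `n` with leaf set `A`, the probability that
all root-to-leaf paths land in `D` is at least `(μⁿ D)^|A|`. -/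
lemma main_bound (μ : Measure ℝ) [IsProbabilityMeasure μ] :
    ∀ (n : ℕ) (D : Set (Fin n → ℝ)), MeasurableSet D →
      ∀ (A : Finset (List ℕ)), (∀ a ∈ A, a.length = n) →
    ((Measure.pi fun _ : Fin n => μ) D) ^ A.card
      ≤ (Measure.pi fun _ : ↥(verts n A) => μ) (allE n A D) := by
  intro n
  induction n with
  | zero =>
    intro D hD A hlen
    have hsub : A ⊆ {[]} := fun a ha =>
      Finset.mem_singleton.2 (List.length_eq_zero_iff.1 (hlen a ha))
    rcases Finset.subset_singleton_iff.1 hsub with rfl | rfl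
    · simp [allE]
    · by_cases h : (fun _ : Fin 0 => (0:ℝ)) ∈ D
      · have huniv : allE 0 {[]} D = Set.univ := by
          ext ω
          simp only [allE, Set.mem_setOf_eq, Set.mem_univ, iff_true]
          intro a ha
          have : (fun i : Fin 0 => ω ⟨a.take (i.val + 1), take_mem_verts ha i.isLt⟩)
              = (fun _ : Fin 0 => (0:ℝ)) := Subsingleton.elim _ _
          rw [this]; exact h
        rw [huniv, measure_univ, Finset.card_singleton, pow_one]
        exact prob_le_one
      · have hzero : (Measure.pi fun _ : Fin 0 => μ) D = 0 := by
          have hx : (isEmptyElim : ∀ i : Fin 0, ℝ) ∉ D := fun hmem => h (by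
            rw [show (fun _ : Fin 0 => (0:ℝ)) = (isEmptyElim : ∀ i : Fin 0, ℝ) from
              funext fun i => i.elim0]
            exact hmem)
          rw [Measure.pi_of_empty (fun _ : Fin 0 => μ), Measure.dirac_apply' _ hD,
            Set.indicator_of_notMem hx]
        rw [hzero, Finset.card_singleton, pow_one]
        exact zero_le
  | succ n IHn =>
    intro D hD
    suffices H : ∀ (m : ℕ) (A : Finset (List ℕ)), A.card ≤ m → (∀ a ∈ A, a.length = n + 1) →
        ((Measure.pi fun _ : Fin (n+1) => μ) D) ^ A.card
          ≤ (Measure.pi fun _ : ↥(verts (n+1) A) => μ) (allE (n+1) A D) by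
      intro A hlen; exact H A.card A le_rfl hlen
    intro m
    induction m with
    | zero =>
      intro A hcard hlen
      rw [Finset.card_eq_zero.1 (Nat.le_zero.1 hcard)]
      simp [allE]
    | succ m IHm =>
      intro A hcard hlen
      rcases A.eq_empty_or_nonempty with rfl | hne
      · simp [allE]
      classical
      obtain ⟨a₀, ha₀⟩ := hne
      have ha_ne : ∀ a ∈ A, a ≠ [] := fun a ha h => by simpa [h] using hlen a ha
      set c := a₀.headI with hcdef
      by_cases hsingle : ∀ a ∈ A, a.headI = c
      · -- single-head case: condition on the root-child label and use the outer IH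
        set T := A.image List.tail with hT
        have hTlen : ∀ t ∈ T, t.length = n := by
          intro t ht
          obtain ⟨a, ha, rfl⟩ := Finset.mem_image.1 ht
          rw [List.length_tail, hlen a ha]
          omega
        have hTcard : T.card = A.card := by
          refine Finset.card_image_of_injOn ?_
          intro a ha b hb htail
          have h1 : a = c :: a.tail := by
            conv_lhs => rw [eq_cons_of_ne_nil (ha_ne a ha), hsingle a ha]
          have h2 : b = c :: b.tail := by
            conv_lhs => rw [eq_cons_of_ne_nil (ha_ne b hb), hsingle b hb]
          rw [h1, h2, htail]
        rw [measure_allE_singleHead μ n D hD A ⟨a₀, ha₀⟩ hlen c hsingle T hT,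
          pi_succ_eq μ n D hD]
        have hg : Measurable fun x : ℝ => (Measure.pi fun _ : Fin n => μ) (consF x ⁻¹' D) := by
          have : ∀ x : ℝ, consF x ⁻¹' D = Prod.mk x ⁻¹'
              ((fun z : ℝ × (Fin n → ℝ) => (Fin.cons z.1 z.2 : Fin (n+1) → ℝ)) ⁻¹' D) :=
            fun x => rfl
          simp only [this]
          exact measurable_measure_prodMk_left (measurable_finCons hD)
        calc (∫⁻ x, (Measure.pi fun _ : Fin n => μ) (consF x ⁻¹' D) ∂μ) ^ A.card
            ≤ ∫⁻ x, ((Measure.pi fun _ : Fin n => μ) (consF x ⁻¹' D)) ^ A.card ∂μ :=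
              lintegral_pow_le' hg A.card
          _ ≤ ∫⁻ x, (Measure.pi fun _ : ↥(verts n T) => μ) (allE n T (consF x ⁻¹' D)) ∂μ := by
              refine lintegral_mono fun x => ?_
              have := IHn (consF x ⁻¹' D)
                (hD.preimage (measurable_finCons.comp measurable_prodMk_left)) T hTlen
              rwa [hTcard] at this
      · -- split case: two nonempty groups of leaves with disjoint vertex sets
        push_neg at hsingle
        obtain ⟨b, hb, hbne⟩ := hsingle
        set A₁ := A.filter (fun a => a.headI = c) with hA₁
        set A₂ := A.filter (fun a => ¬ a.headI = c) with hA₂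
        have hbA₂ : b ∈ A₂ := Finset.mem_filter.2 ⟨hb, hbne⟩
        have ha₀A₁ : a₀ ∈ A₁ := Finset.mem_filter.2 ⟨ha₀, rfl⟩
        have hcards : A₁.card + A₂.card = A.card :=
          Finset.card_filter_add_card_filter_not _
        have hc₁ : A₁.card ≤ m := by
          have := Finset.card_pos.2 ⟨b, hbA₂⟩
          omega
        have hc₂ : A₂.card ≤ m := by
          have := Finset.card_pos.2 ⟨a₀, ha₀A₁⟩
          omega
        have h₁len : ∀ a ∈ A₁, a.length = n + 1 :=
          fun a ha => hlen a (Finset.mem_of_mem_filter a ha)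
        have h₂len : ∀ a ∈ A₂, a.length = n + 1 :=
          fun a ha => hlen a (Finset.mem_of_mem_filter a ha)
        have hdisj : Disjoint (verts (n+1) A₁) (verts (n+1) A₂) := by
          rw [Finset.disjoint_left]
          intro v hv1 hv2
          obtain ⟨a, ha, i, hi, rfl⟩ := mem_verts_iff.1 hv1
          obtain ⟨b', hb', j, hj, hvb⟩ := mem_verts_iff.1 hv2
          have h1 : (a.take (i+1)).headI = c := by
            rw [headI_take (ha_ne a (Finset.mem_of_mem_filter a ha))]
            exact (Finset.mem_filter.1 ha).2
          have h2 : (a.take (i+1)).headI = b'.headI := by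
            rw [hvb, headI_take (ha_ne b' (Finset.mem_of_mem_filter b' hb'))]
          exact (Finset.mem_filter.1 hb').2 (by rw [← h2, h1])
        rw [measure_allE_union μ (n+1) D hD A A₁ A₂
          (Finset.filter_union_filter_not_eq _ A).symm hdisj, ← hcards, pow_add]
        exact mul_le_mul' (IHm A₁ hc₁ h₁len) (IHm A₂ hc₂ h₂len)

/-- for any tree of height `n` with `k` vertices at level `n`,
`1 − P(B; Γ) ≥ (1 − μⁿ(B))^k`. -/
theorem one_sub_pathProb_ge (μ : Measure ℝ) [IsProbabilityMeasure μ]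
    (n k : ℕ) (A : Finset (List ℕ)) (hlen : ∀ a ∈ A, a.length = n) (hcard : A.card = k)
    (B : Set (Fin n → ℝ)) (hB : MeasurableSet B) :
    (1 - ((Measure.pi fun _ : Fin n => μ) B).toReal) ^ k ≤ 1 - pathProb μ n A B := by
  classical
  set Eex : Set (↥(verts n A) → ℝ) := {ω | ∃ a, ∃ ha : a ∈ A,
      (fun i : Fin n => ω ⟨a.take (i.val + 1), take_mem_verts ha i.isLt⟩) ∈ B} with hEdef
  have hEmeas : MeasurableSet Eex := by
    have : Eex = ⋃ x : {a // a ∈ A},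
        (fun (ω : ↥(verts n A) → ℝ) (i : Fin n) =>
          ω ⟨x.1.take (i.val + 1), take_mem_verts x.2 i.isLt⟩) ⁻¹' B := by
      ext ω
      constructor
      · rintro ⟨a, ha, h⟩
        exact Set.mem_iUnion.2 ⟨⟨a, ha⟩, h⟩
      · intro h
        obtain ⟨x, hx⟩ := Set.mem_iUnion.1 h
        exact ⟨x.1, x.2, hx⟩
    rw [this]
    exact MeasurableSet.iUnion fun x =>
      (measurable_pi_lambda _ fun i => measurable_pi_apply _) hB
  have hcompl : Eexᶜ = allE n A Bᶜ := by
    ext ω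
    simp [hEdef, allE, not_exists]
  have hmain := main_bound μ n Bᶜ hB.compl A hlen
  rw [← hcompl] at hmain
  have hp : pathProb μ n A B = ((Measure.pi fun _ : ↥(verts n A) => μ) Eex).toReal := rfl
  rw [hp]
  have h1 : (1:ℝ) - ((Measure.pi fun _ : ↥(verts n A) => μ) Eex).toReal
      = ((Measure.pi fun _ : ↥(verts n A) => μ) Eexᶜ).toReal := by
    rw [measure_compl hEmeas (measure_ne_top _ _), measure_univ,
      ENNReal.toReal_sub_of_le prob_le_one ENNReal.one_ne_top, ENNReal.toReal_one]
  have h2 : (1:ℝ) - ((Measure.pi fun _ : Fin n => μ) B).toReal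
      = ((Measure.pi fun _ : Fin n => μ) Bᶜ).toReal := by
    rw [measure_compl hB (measure_ne_top _ _), measure_univ,
      ENNReal.toReal_sub_of_le prob_le_one ENNReal.one_ne_top, ENNReal.toReal_one]
  rw [h1, h2, ← ENNReal.toReal_pow]
  refine ENNReal.toReal_mono (measure_ne_top _ _) ?_
  rw [← hcard]
  exact hmain
end

section
/- If the vector (n₁',...,n_b') majorizes (n₁,...,n_b) (i.e., the latter is a convex combination of permutations of the former), then for any Borel D ⊆ ℝ² and probability measure μ: Π_{i=1}^b Ψ(1, nᵢ; D) ≤ Π_{i=1}^b Ψ(1, nᵢ'; D). -/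
/-!
For a fixed first label `a`, write `H a = μ(D/a)` for the measure of the section of `D`.
Then `Ψ(1, m; D) = ∫ H^m dμ`, and by Hölder's inequality the moment function
`m ↦ ∫ H^m dμ` is log-convex. If `nᵢ = ∑_σ w_σ n'_{σ i}`, log-convexity bounds
`Ψ(1, nᵢ; D)` by `∏_σ Ψ(1, n'_{σ i}; D)^{w_σ}`; multiplying over `i`, each inner product
over `i` is a permutation of `∏ᵢ Ψ(1, nᵢ'; D)`, and the weights sum to one.
-/

open MeasureTheory ProbabilityTheory Filter Finset
open scoped ENNReal

theorem ENNReal.rpow_sum_of_nonneg {ι : Type*} (a : ℝ≥0∞) {s : Finset ι} {p : ι → ℝ}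
    (hp : ∀ i ∈ s, 0 ≤ p i) : a ^ (∑ i ∈ s, p i) = ∏ i ∈ s, a ^ p i := by
  classical
  induction s using Finset.cons_induction with
  | empty => simp
  | cons i s _ ih =>
    have hps : ∀ j ∈ s, 0 ≤ p j := fun j hj => hp j (mem_cons_of_mem hj)
    rw [sum_cons, prod_cons, ENNReal.rpow_add_of_nonneg _ _ (hp i (mem_cons_self i s))
      (sum_nonneg hps), ih hps]

theorem lintegral_rpow_sum_mul_le_prod {α ι : Type*} [MeasurableSpace α] {μ : Measure α}
    {f : α → ℝ≥0∞} (hf : AEMeasurable f μ) (s : Finset ι) {w p : ι → ℝ}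
    (hw : ∑ i ∈ s, w i = 1) (hw0 : ∀ i ∈ s, 0 ≤ w i) (hp : ∀ i ∈ s, 0 ≤ p i) :
    ∫⁻ a, f a ^ (∑ i ∈ s, w i * p i) ∂μ ≤ ∏ i ∈ s, (∫⁻ a, f a ^ p i ∂μ) ^ w i := by
  have hsplit : ∀ a, f a ^ (∑ i ∈ s, w i * p i) = ∏ i ∈ s, (f a ^ p i) ^ w i := fun a => by
    rw [ENNReal.rpow_sum_of_nonneg _ fun i hi => mul_nonneg (hw0 i hi) (hp i hi)]
    exact prod_congr rfl fun i _ => by rw [mul_comm, ENNReal.rpow_mul]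
  simp_rw [hsplit]
  exact ENNReal.lintegral_prod_norm_pow_le s (fun i _ => hf.pow_const _) hw hw0

theorem prod_le_prod_of_eq_sum_perm {ι : Type*} [Fintype ι] [DecidableEq ι] {F : ℝ → ℝ≥0∞}
    {w : Equiv.Perm ι → ℝ} (hw : ∑ σ, w σ = 1) (hw0 : ∀ σ, 0 ≤ w σ)
    (hF : ∀ m : Equiv.Perm ι → ℝ, (∀ σ, 0 ≤ m σ) → F (∑ σ, w σ * m σ) ≤ ∏ σ, F (m σ) ^ w σ)
    {x x' : ι → ℝ} (hx' : ∀ i, 0 ≤ x' i) (hmaj : ∀ i, x i = ∑ σ, w σ * x' (σ i)) :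
    ∏ i, F (x i) ≤ ∏ i, F (x' i) :=
  calc ∏ i, F (x i)
      ≤ ∏ i, ∏ σ, F (x' (σ i)) ^ w σ :=
        prod_le_prod' fun i _ => hmaj i ▸ hF (fun σ => x' (σ i)) fun σ => hx' (σ i)
    _ = ∏ σ, (∏ i, F (x' i)) ^ w σ := by
        rw [Finset.prod_comm]
        refine prod_congr rfl fun σ _ => ?_
        rw [ENNReal.prod_rpow_of_nonneg (hw0 σ), Equiv.prod_comp σ fun j => F (x' j)]
    _ = ∏ i, F (x' i) := by
        rw [← ENNReal.rpow_sum_of_nonneg _ fun σ _ => hw0 σ, hw, ENNReal.rpow_one]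

/-- The paper's `μ(D/a)`. -/
noncomputable def sectionMeasure (μ : Measure ℝ) (D : Set (Fin 2 → ℝ)) (a : ℝ) : ℝ≥0∞ :=
  μ {t | (Fin.cons a fun _ => t : Fin 2 → ℝ) ∈ D}

section sectionMeasure

variable {μ : Measure ℝ} {D : Set (Fin 2 → ℝ)}

theorem measurable_sectionMeasure [SFinite μ] (hD : MeasurableSet D) :
    Measurable (sectionMeasure μ D) := by
  have hpair : Measurable fun p : ℝ × ℝ => (Fin.cons p.1 fun _ => p.2 : Fin 2 → ℝ) :=
    measurable_pi_lambda _ fun i => Fin.cases measurable_fst (fun _ => measurable_snd) i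
  exact measurable_measure_prodMk_left (hpair hD)

theorem lintegral_sectionMeasure_rpow_ne_top [IsFiniteMeasure μ] {m : ℝ} (hm : 0 ≤ m) :
    ∫⁻ a, sectionMeasure μ D a ^ m ∂μ ≠ ∞ := by
  refine ne_top_of_le_ne_top (b := ∫⁻ _, μ Set.univ ^ m ∂μ) ?_ (lintegral_mono fun _ => ?_)
  · exact (lintegral_const_lt_top (ENNReal.rpow_ne_top_of_nonneg hm (measure_ne_top μ _))).ne
  · exact ENNReal.rpow_le_rpow (measure_mono (Set.subset_univ _)) hm

theorem psi_one_eq_toReal_lintegral [IsFiniteMeasure μ] (hD : MeasurableSet D) {m : ℝ}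
    (hm : 0 ≤ m) : Psi μ 1 ![1, m] D = (∫⁻ a, sectionMeasure μ D a ^ m ∂μ).toReal := by
  have hfin : ∀ a, sectionMeasure μ D a ^ m < ∞ := fun a =>
    ENNReal.rpow_lt_top_of_nonneg hm (measure_ne_top μ _)
  simp only [Psi, Matrix.cons_val_zero, Matrix.cons_val_one, Fin.succ_zero_eq_one, div_one,
    Real.rpow_one]
  rw [← integral_toReal ((measurable_sectionMeasure hD).pow_const m).aemeasurable
    (.of_forall hfin)]
  exact integral_congr_ae (.of_forall fun _ => ENNReal.toReal_rpow _ m)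

end sectionMeasure

/-- if `(n₁',…,n_b')` majorizes `(n₁,…,n_b)` — i.e. the latter is a
convex combination of permutations of the former — then
`Π Ψ(1, nᵢ; D) ≤ Π Ψ(1, nᵢ'; D)`. -/
theorem psi_product_majorization (μ : Measure ℝ) [IsProbabilityMeasure μ]
    (D : Set (Fin 2 → ℝ)) (hD : MeasurableSet D)
    (b : ℕ) (x x' : Fin b → ℕ) (w : Equiv.Perm (Fin b) → ℝ)
    (hw0 : ∀ σ, 0 ≤ w σ) (hw1 : ∑ σ : Equiv.Perm (Fin b), w σ = 1)
    (hmaj : ∀ i, (x i : ℝ) = ∑ σ : Equiv.Perm (Fin b), w σ * (x' (σ i) : ℝ)) :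
    ∏ i : Fin b, Psi μ 1 ![1, (x i : ℝ)] D ≤ ∏ i : Fin b, Psi μ 1 ![1, (x' i : ℝ)] D := by
  set F : ℝ → ℝ≥0∞ := fun m => ∫⁻ a, sectionMeasure μ D a ^ m ∂μ
  have hlogconvex : ∀ m : Equiv.Perm (Fin b) → ℝ, (∀ σ, 0 ≤ m σ) →
      F (∑ σ, w σ * m σ) ≤ ∏ σ, F (m σ) ^ w σ := fun m hm =>
    lintegral_rpow_sum_mul_le_prod (measurable_sectionMeasure hD).aemeasurable _ hw1
      (fun σ _ => hw0 σ) fun σ _ => hm σ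
  have hprod : ∏ i, F (x i) ≤ ∏ i, F (x' i) :=
    prod_le_prod_of_eq_sum_perm hw1 hw0 hlogconvex (fun _ => Nat.cast_nonneg _) hmaj
  simp only [psi_one_eq_toReal_lintegral hD (Nat.cast_nonneg _), ← ENNReal.toReal_prod]
  exact ENNReal.toReal_mono
    (ENNReal.prod_ne_top fun i _ => lintegral_sectionMeasure_rpow_ne_top (Nat.cast_nonneg _))
    hprod
end

section
/- Let Γ be a spherically symmetric tree with growth function f satisfying Σ_{n=1}^∞ 1/f(n) < ∞, with i.i.d. mean-1 exponential edge weights X(v). Then almost surely there exists an infinite path ρ = v₀, v₁, v₂, ... with Σ_{n=1}^∞ X(vₙ) < ∞; i.e., an explosion occurs with probability one. -/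
open MeasureTheory ProbabilityTheory Filter Finset
open scoped ENNReal

/-- level-`n` vertex set of the spherically symmetric tree with growth function `f`
(each vertex at distance `n-1` from the root has `f n` children); a vertex is
identified with its address list. -/
def sphA (f : ℕ → ℕ) : ℕ → Finset (List ℕ)
  | 0 => {[]}
  | n + 1 => (sphA f n).biUnion fun l => (Finset.range (f (n + 1))).image fun j => l ++ [j]

lemma sphA_nonempty (f : ℕ → ℕ) (hf : ∀ n, 1 ≤ f n) : ∀ n, (sphA f n).Nonempty := by
  intro n
  induction n with
  | zero => exact ⟨[], by simp [sphA]⟩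
  | succ n ih =>
      obtain ⟨l, hl⟩ := ih
      exact ⟨l ++ [0], Finset.mem_biUnion.2 ⟨l, hl,
        Finset.mem_image.2 ⟨0, Finset.mem_range.2 (hf _), rfl⟩⟩⟩

/-! ### Auxiliary material for the explosion theorem -/

section ExplosionAux

lemma sphA_length (f : ℕ → ℕ) : ∀ n, ∀ l ∈ sphA f n, l.length = n := by
  intro n
  induction n with
  | zero => intro l hl; simp [sphA] at hl; simp [hl]
  | succ n ih =>
      intro l hl
      simp only [sphA, Finset.mem_biUnion, Finset.mem_image, Finset.mem_range] at hl
      obtain ⟨l', hl', j, _, rfl⟩ := hl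
      simp [ih l' hl']

/-- existence of a minimizer of `F` on `[0, k)` -/
lemma selIdx_exists (k : ℕ) (hk : 0 < k) (F : ℕ → ℝ) :
    ∃ j, j < k ∧ ∀ i < k, F j ≤ F i := by
  obtain ⟨j, hj, hmin⟩ :=
    Finset.exists_min_image F (s := Finset.range k) ⟨0, Finset.mem_range.2 hk⟩
  exact ⟨j, Finset.mem_range.1 hj, fun i hi => hmin i (Finset.mem_range.2 hi)⟩

open Classical in
/-- the least argmin of `F` on `[0, k)` -/
noncomputable def selIdx (k : ℕ) (hk : 0 < k) (F : ℕ → ℝ) : ℕ :=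
  Nat.find (selIdx_exists k hk F)

lemma selIdx_lt (k : ℕ) (hk : 0 < k) (F : ℕ → ℝ) : selIdx k hk F < k :=
  (Nat.find_spec (selIdx_exists k hk F)).1

lemma selIdx_min (k : ℕ) (hk : 0 < k) (F : ℕ → ℝ) :
    ∀ i < k, F (selIdx k hk F) ≤ F i :=
  (Nat.find_spec (selIdx_exists k hk F)).2

lemma selIdx_congr {k : ℕ} {hk : 0 < k} {F G : ℕ → ℝ} (h : ∀ j < k, F j = G j) :
    selIdx k hk F = selIdx k hk G := by
  classical
  have hiff : ∀ n, (n < k ∧ ∀ i < k, F n ≤ F i) ↔ (n < k ∧ ∀ i < k, G n ≤ G i) := by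
    intro n
    constructor
    · rintro ⟨h1, h2⟩
      exact ⟨h1, fun i hi => by rw [← h _ h1, ← h _ hi]; exact h2 i hi⟩
    · rintro ⟨h1, h2⟩
      exact ⟨h1, fun i hi => by rw [h _ h1, h _ hi]; exact h2 i hi⟩
  apply le_antisymm
  · exact Nat.find_min' _ ((hiff _).2 (Nat.find_spec (selIdx_exists k hk G)))
  · exact Nat.find_min' _ ((hiff _).1 (Nat.find_spec (selIdx_exists k hk F)))

lemma measurableSet_selP (k m : ℕ) :
    MeasurableSet {F : ℕ → ℝ | m < k ∧ ∀ i < k, F m ≤ F i} := by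
  by_cases h : m < k
  · have : {F : ℕ → ℝ | m < k ∧ ∀ i < k, F m ≤ F i}
        = ⋂ i ∈ Set.Iio k, {F : ℕ → ℝ | F m ≤ F i} := by
      ext F
      simp only [Set.mem_setOf_eq, Set.mem_iInter, Set.mem_Iio, h, true_and]
    rw [this]
    exact MeasurableSet.biInter (Set.to_countable _) fun i _ =>
      measurableSet_le (measurable_pi_apply m) (measurable_pi_apply i)
  · have : {F : ℕ → ℝ | m < k ∧ ∀ i < k, F m ≤ F i} = ∅ := by
      ext F; simp [h]
    simp [this]

lemma measurable_selIdx (k : ℕ) (hk : 0 < k) :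
    Measurable fun F : ℕ → ℝ => selIdx k hk F := by
  classical
  apply measurable_to_countable'
  intro j
  have hset : (fun F : ℕ → ℝ => selIdx k hk F) ⁻¹' {j}
      = {F : ℕ → ℝ | j < k ∧ ∀ i < k, F j ≤ F i}
        ∩ ⋂ m ∈ Set.Iio j, {F : ℕ → ℝ | m < k ∧ ∀ i < k, F m ≤ F i}ᶜ := by
    ext F
    simp only [Set.mem_preimage, Set.mem_singleton_iff, Set.mem_inter_iff, Set.mem_iInter,
      Set.mem_compl_iff, Set.mem_setOf_eq, Set.mem_Iio, selIdx, Nat.find_eq_iff]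
  rw [hset]
  exact (measurableSet_selP k j).inter
    (MeasurableSet.biInter (Set.to_countable _) fun m _ => (measurableSet_selP k m).compl)

lemma measurable_finset_inf' {α ι : Type*} [MeasurableSpace α] {s : Finset ι}
    (hs : s.Nonempty) {g : ι → α → ℝ} (hg : ∀ i, Measurable (g i)) :
    Measurable fun x => s.inf' hs fun i => g i x := by
  apply measurable_of_Iio
  intro a
  have : (fun x => s.inf' hs fun i => g i x) ⁻¹' Set.Iio a = ⋃ i ∈ s, {x | g i x < a} := by
    ext x
    simp [Finset.inf'_lt_iff]
  rw [this]
  exact MeasurableSet.biUnion s.countable_toSet fun i _ =>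
    measurableSet_lt (hg i) measurable_const

variable {Ω : Type*} [MeasureSpace Ω]
variable (f : ℕ → ℕ) (hf : ∀ n, 1 ≤ f n) (X : List ℕ → Ω → ℝ)

/-- the greedy vertex at level `n` -/
noncomputable def gvtx : ℕ → Ω → List ℕ
  | 0 => fun _ => []
  | n + 1 => fun ω =>
      gvtx n ω ++ [selIdx (f (n + 1)) (hf (n + 1)) fun j => X (gvtx n ω ++ [j]) ω]

/-- the greedy choice of child index at step `n` -/
noncomputable def gsel (n : ℕ) (ω : Ω) : ℕ :=
  selIdx (f (n + 1)) (hf (n + 1)) fun j => X (gvtx f hf X n ω ++ [j]) ω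

lemma gvtx_succ (n : ℕ) (ω : Ω) :
    gvtx f hf X (n + 1) ω = gvtx f hf X n ω ++ [gsel f hf X n ω] := rfl

lemma gvtx_mem (n : ℕ) (ω : Ω) : gvtx f hf X n ω ∈ sphA f n := by
  induction n with
  | zero => simp [gvtx, sphA]
  | succ n ih =>
      rw [gvtx_succ]
      exact Finset.mem_biUnion.2 ⟨_, ih,
        Finset.mem_image.2 ⟨_, Finset.mem_range.2 (selIdx_lt _ _ _), rfl⟩⟩

lemma gvtx_eq_map (ω : Ω) : ∀ n,
    gvtx f hf X n ω = (List.range n).map fun k => gsel f hf X k ω := by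
  intro n
  induction n with
  | zero => simp [gvtx]
  | succ n ih => rw [gvtx_succ, List.range_succ, List.map_append, ← ih]; rfl

/-- the tuple of weights over a finite set of vertices -/
def tup (S : Finset (List ℕ)) : Ω → (S → ℝ) := fun ω i => X i ω

lemma measurable_tup (hmeas : ∀ v, Measurable (X v)) (S : Finset (List ℕ)) :
    Measurable (tup X S) :=
  measurable_pi_lambda _ fun i => hmeas i

/-- all vertices up to level `n` -/
def lvl (n : ℕ) : Finset (List ℕ) := (Finset.range (n + 1)).biUnion (sphA f)

lemma comap_tup_mono {S T : Finset (List ℕ)} (hST : S ⊆ T) :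
    MeasurableSpace.comap (tup X S) inferInstance
      ≤ MeasurableSpace.comap (tup X T) inferInstance := by
  have hrw : tup X S = (fun (w : T → ℝ) (i : S) => w ⟨i.1, hST i.2⟩) ∘ tup X T := rfl
  rw [hrw, ← MeasurableSpace.comap_comp]
  exact MeasurableSpace.comap_mono
    ((measurable_pi_lambda _ fun i => measurable_pi_apply _).comap_le)

lemma measurable_comap_tup {S : Finset (List ℕ)} {γ : Type*} [MeasurableSpace γ]
    {φ : (S → ℝ) → γ} (hφ : Measurable φ) :
    Measurable[MeasurableSpace.comap (tup X S) inferInstance]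
      fun ω => φ (tup X S ω) :=
  hφ.comp (Measurable.of_comap_le le_rfl)

lemma child_mem_lvl {n : ℕ} {l : List ℕ} (hl : l ∈ sphA f n) {j : ℕ}
    (hj : j < f (n + 1)) : l ++ [j] ∈ lvl f (n + 1) :=
  Finset.mem_biUnion.2 ⟨n + 1, Finset.mem_range.2 (by omega),
    Finset.mem_biUnion.2 ⟨l, hl, Finset.mem_image.2 ⟨j, Finset.mem_range.2 hj, rfl⟩⟩⟩

/-- the greedy event `{gvtx n = l}` is measurable w.r.t. the weights of levels `≤ n`. -/
lemma event_comap_measurable :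
    ∀ n l, MeasurableSet[MeasurableSpace.comap (tup X (lvl f n)) inferInstance]
      {ω | gvtx f hf X n ω = l} := by
  intro n
  induction n with
  | zero =>
      intro l
      by_cases h : l = ([] : List ℕ)
      · have : {ω : Ω | gvtx f hf X 0 ω = l} = Set.univ := by
          ext ω; simp [gvtx, h]
        rw [this]
        exact @MeasurableSet.univ Ω (MeasurableSpace.comap (tup X (lvl f 0)) inferInstance)
      · have : {ω : Ω | gvtx f hf X 0 ω = l} = ∅ := by
          ext ω; simp [gvtx, Ne.symm h]
        rw [this]
        exact @MeasurableSet.empty Ω (MeasurableSpace.comap (tup X (lvl f 0)) inferInstance)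
  | succ n ih =>
      intro l
      classical
      set k := f (n + 1) with hk
      have hkpos : 0 < k := hf (n + 1)
      have hdecomp : {ω : Ω | gvtx f hf X (n + 1) ω = l}
          = ⋃ l' ∈ (sphA f n : Set (List ℕ)),
              ({ω | gvtx f hf X n ω = l'} ∩
                {ω | l' ++ [selIdx k hkpos fun j => X (l' ++ [j]) ω] = l}) := by
        ext ω
        simp only [Set.mem_setOf_eq, Set.mem_iUnion, Set.mem_inter_iff, Finset.mem_coe,
          exists_prop]
        constructor
        · intro h
          exact ⟨gvtx f hf X n ω, gvtx_mem f hf X n ω, rfl, h⟩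
        · rintro ⟨l', _, h1, h2⟩
          rw [gvtx_succ]
          simp only [gsel]
          rw [h1]
          exact h2
      rw [hdecomp]
      apply MeasurableSet.biUnion ((sphA f n : Set (List ℕ)).to_countable)
      intro l' hl'
      have hl'' : l' ∈ sphA f n := hl'
      apply MeasurableSet.inter
      · exact comap_tup_mono X (by
          intro w hw
          simp only [lvl, Finset.mem_biUnion, Finset.mem_range] at hw ⊢
          obtain ⟨i, hi, hwi⟩ := hw
          exact ⟨i, by omega, hwi⟩) _ (ih l')
      · -- selection event
        set φ : ((lvl f (n + 1) : Finset (List ℕ)) → ℝ) → ℕ :=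
          fun w => selIdx k hkpos fun j =>
            if h : j < k then w ⟨l' ++ [j], child_mem_lvl f hl'' h⟩ else 0 with hφ
        have hφmeas : Measurable φ := by
          apply (measurable_selIdx k hkpos).comp
          apply measurable_pi_lambda
          intro j
          by_cases h : j < k
          · simp only [h, dif_pos]
            exact measurable_pi_apply _
          · simp only [h, dif_neg, not_false_iff]
            exact measurable_const
        have hrw : (fun ω : Ω => selIdx k hkpos fun j => X (l' ++ [j]) ω)
            = fun ω => φ (tup X (lvl f (n + 1)) ω) := by
          funext ω
          apply selIdx_congr
          intro j hj
          simp [hφ, tup, hj]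
        have hmeasSel : Measurable[MeasurableSpace.comap (tup X (lvl f (n + 1)))
            inferInstance] fun ω : Ω => selIdx k hkpos fun j => X (l' ++ [j]) ω := by
          rw [hrw]
          exact measurable_comap_tup X hφmeas
        have : {ω : Ω | l' ++ [selIdx k hkpos fun j => X (l' ++ [j]) ω] = l}
            = (fun ω : Ω => selIdx k hkpos fun j => X (l' ++ [j]) ω) ⁻¹'
                {j : ℕ | l' ++ [j] = l} := rfl
        rw [this]
        exact hmeasSel ((Set.to_countable _).measurableSet)

/-- minimal weight among the children of `l` (at level `n+1`). -/
noncomputable def minc (n : ℕ) (l : List ℕ) (ω : Ω) : ℝ :=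
  (Finset.range (f (n + 1))).inf' ⟨0, Finset.mem_range.2 (hf (n + 1))⟩
    fun j => X (l ++ [j]) ω

lemma measurable_minc (hmeas : ∀ v, Measurable (X v)) (n : ℕ) (l : List ℕ) :
    Measurable (minc f hf X n l) :=
  measurable_finset_inf' _ fun j => hmeas (l ++ [j])

lemma gvtx_weight_eq_minc (n : ℕ) (ω : Ω) :
    X (gvtx f hf X (n + 1) ω) ω = minc f hf X n (gvtx f hf X n ω) ω := by
  rw [gvtx_succ]
  simp only [gsel]
  apply le_antisymm
  · apply Finset.le_inf'
    intro j hj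
    exact selIdx_min (f (n + 1)) (hf (n + 1))
      (fun j => X (gvtx f hf X n ω ++ [j]) ω) j (Finset.mem_range.1 hj)
  · exact Finset.inf'_le _ (Finset.mem_range.2 (selIdx_lt _ _ _))

end ExplosionAux

section ExplosionMain

variable {Ω : Type*} [MeasureSpace Ω] [IsProbabilityMeasure (ℙ : Measure Ω)]
variable (f : ℕ → ℕ) (hf : ∀ n, 1 ≤ f n) (X : List ℕ → Ω → ℝ)

lemma tail_minc (hmeas : ∀ v, Measurable (X v))
    (hindep : iIndepFun X ℙ)
    (hexp : ∀ v, ∀ t : ℝ, 0 ≤ t → ℙ {ω | t < X v ω} = ENNReal.ofReal (Real.exp (-t)))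
    (n : ℕ) (l : List ℕ) {t : ℝ} (ht : 0 ≤ t) :
    ℙ {ω | t < minc f hf X n l ω}
      = ENNReal.ofReal (Real.exp (-((f (n + 1) : ℝ) * t))) := by
  classical
  set k := f (n + 1) with hk
  set T : Finset (List ℕ) := (Finset.range k).image fun j => l ++ [j] with hT
  have hinj : Function.Injective fun j : ℕ => l ++ [j] := by
    intro a b hab; simpa using hab
  have hset : {ω : Ω | t < minc f hf X n l ω} = ⋂ w ∈ T, {ω | t < X w ω} := by
    ext ω
    simp only [Set.mem_setOf_eq, minc, Finset.lt_inf'_iff, Set.mem_iInter, hT,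
      Finset.mem_image, Finset.mem_range]
    refine (Finset.lt_inf'_iff _).trans ?_
    aesop
  rw [hset]
  have := hindep.meas_biInter (S := T) (s := fun w => {ω | t < X w ω})
    (fun w _ => ⟨Set.Ioi t, measurableSet_Ioi, by ext ω; simp [Set.mem_preimage]⟩)
  rw [this]
  have hcard : T.card = k := by
    rw [hT, Finset.card_image_of_injective _ hinj, Finset.card_range]
  calc ∏ w ∈ T, ℙ {ω | t < X w ω}
      = ∏ _w ∈ T, ENNReal.ofReal (Real.exp (-t)) := by
        apply Finset.prod_congr rfl
        intro w _
        exact hexp w t ht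
    _ = ENNReal.ofReal (Real.exp (-t)) ^ k := by rw [Finset.prod_const, hcard]
    _ = ENNReal.ofReal (Real.exp (-t) ^ k) := by
        rw [ENNReal.ofReal_pow (Real.exp_nonneg _)]
    _ = ENNReal.ofReal (Real.exp (-((k : ℝ) * t))) := by
        rw [← Real.exp_nat_mul]
        ring_nf

lemma ae_nonneg_X (hmeas : ∀ v, Measurable (X v))
    (hexp : ∀ v, ∀ t : ℝ, 0 ≤ t → ℙ {ω | t < X v ω} = ENNReal.ofReal (Real.exp (-t)))
    (v : List ℕ) : ∀ᵐ ω ∂(ℙ : Measure Ω), 0 ≤ X v ω := by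
  have h0 : ℙ {ω | 0 < X v ω} = 1 := by
    rw [hexp v 0 le_rfl]; simp
  have hsub : {ω : Ω | ¬ 0 ≤ X v ω} ⊆ {ω | 0 < X v ω}ᶜ := by
    intro ω hω
    simp only [Set.mem_compl_iff, Set.mem_setOf_eq] at hω ⊢
    intro h; exact hω h.le
  refine measure_mono_null hsub ?_
  have hms : MeasurableSet {ω : Ω | 0 < X v ω} := measurableSet_lt measurable_const (hmeas v)
  rw [measure_compl hms (by simp), h0]
  simp

lemma lintegral_minc (hmeas : ∀ v, Measurable (X v))
    (hindep : iIndepFun X ℙ)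
    (hexp : ∀ v, ∀ t : ℝ, 0 ≤ t → ℙ {ω | t < X v ω} = ENNReal.ofReal (Real.exp (-t)))
    (n : ℕ) (l : List ℕ) :
    ∫⁻ ω, ENNReal.ofReal (minc f hf X n l ω) ∂ℙ
      = ENNReal.ofReal ((f (n + 1) : ℝ)⁻¹) := by
  have hkpos : (0 : ℝ) < (f (n + 1) : ℝ) := by exact_mod_cast hf (n + 1)
  have hnn : 0 ≤ᵐ[(ℙ : Measure Ω)] minc f hf X n l := by
    have h : ∀ᵐ ω ∂(ℙ : Measure Ω), ∀ j ∈ (Finset.range (f (n + 1)) : Set ℕ),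
        0 ≤ X (l ++ [j]) ω := by
      rw [ae_ball_iff (Set.to_countable _)]
      intro j _
      exact ae_nonneg_X (X := X) hmeas hexp (l ++ [j])
    filter_upwards [h] with ω hω
    apply Finset.le_inf'
    intro j hj
    exact hω j hj
  rw [lintegral_eq_lintegral_meas_lt ℙ hnn (measurable_minc f hf X hmeas n l).aemeasurable]
  have hcongr : ∫⁻ t in Set.Ioi (0 : ℝ), ℙ {a | t < minc f hf X n l a}
      = ∫⁻ t in Set.Ioi (0 : ℝ), ENNReal.ofReal (Real.exp (-((f (n + 1) : ℝ) * t))) := by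
    apply setLIntegral_congr_fun measurableSet_Ioi
    intro t ht
    exact tail_minc f hf X hmeas hindep hexp n l (le_of_lt ht)
  rw [hcongr]
  have hint : IntegrableOn (fun t : ℝ => Real.exp (-((f (n + 1) : ℝ) * t)))
      (Set.Ioi (0 : ℝ)) := by
    simpa [neg_mul] using exp_neg_integrableOn_Ioi 0 hkpos
  rw [← ofReal_integral_eq_lintegral_ofReal hint
    (Filter.Eventually.of_forall fun t => Real.exp_nonneg _)]
  congr 1
  have hsub : (∫ x in Set.Ioi (0 : ℝ), Real.exp (-((f (n + 1) : ℝ) * x)))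
      = ((f (n + 1) : ℝ))⁻¹ • ∫ x in Set.Ioi ((f (n + 1) : ℝ) * 0), Real.exp (-x) :=
    integral_comp_mul_left_Ioi (fun x => Real.exp (-x)) 0 hkpos
  rw [hsub, mul_zero, integral_exp_neg_Ioi, neg_zero, Real.exp_zero, smul_eq_mul, mul_one]

lemma lintegral_indicator_minc (hmeas : ∀ v, Measurable (X v))
    (hindep : iIndepFun X ℙ)
    (hexp : ∀ v, ∀ t : ℝ, 0 ≤ t → ℙ {ω | t < X v ω} = ENNReal.ofReal (Real.exp (-t)))
    (n : ℕ) (l : List ℕ) (hl : l ∈ sphA f n) :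
    ∫⁻ ω, ({ω' : Ω | gvtx f hf X n ω' = l}.indicator (fun _ => (1 : ℝ≥0∞)) ω)
        * ENNReal.ofReal (minc f hf X n l ω) ∂ℙ
      = ℙ {ω' | gvtx f hf X n ω' = l} * ENNReal.ofReal ((f (n + 1) : ℝ)⁻¹) := by
  classical
  have hkpos : 0 < f (n + 1) := hf (n + 1)
  set T : Finset (List ℕ) := (Finset.range (f (n + 1))).image fun j => l ++ [j] with hT
  have hmemT : ∀ {j : ℕ}, j < f (n + 1) → l ++ [j] ∈ T := fun {j} h =>
    Finset.mem_image.2 ⟨j, Finset.mem_range.2 h, rfl⟩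
  have hdisj : Disjoint (lvl f n) T := by
    rw [Finset.disjoint_left]
    intro w hw hwT
    simp only [lvl, Finset.mem_biUnion, Finset.mem_range] at hw
    obtain ⟨i, hi, hwi⟩ := hw
    have h1 : w.length = i := sphA_length f i w hwi
    simp only [hT, Finset.mem_image, Finset.mem_range] at hwT
    obtain ⟨j, hj, rfl⟩ := hwT
    have h2 : l.length = n := sphA_length f n l hl
    simp only [List.length_append, List.length_cons, List.length_nil] at h1
    omega
  obtain ⟨B, hB, hAB⟩ := event_comap_measurable f hf X n l
  set φ : ({x // x ∈ lvl f n} → ℝ) → ℝ≥0∞ :=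
    B.indicator (fun _ => (1 : ℝ≥0∞)) with hφ
  set ψ : ({x // x ∈ T} → ℝ) → ℝ≥0∞ := fun w =>
    ENNReal.ofReal ((Finset.range (f (n + 1))).inf' ⟨0, Finset.mem_range.2 hkpos⟩
      fun j => if h : j < f (n + 1) then w ⟨l ++ [j], hmemT h⟩ else 0) with hψ
  have hφm : Measurable φ := measurable_const.indicator hB
  have hψm : Measurable ψ := by
    apply ENNReal.measurable_ofReal.comp
    apply measurable_finset_inf'
    intro j
    by_cases h : j < f (n + 1)
    · simp only [h, dif_pos]
      exact measurable_pi_apply _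
    · simp only [h, dif_neg, not_false_iff]
      exact measurable_const
  have hIndep : IndepFun (φ ∘ tup X (lvl f n)) (ψ ∘ tup X T) ℙ :=
    (hindep.indepFun_finset (lvl f n) T hdisj hmeas).comp hφm hψm
  have heq1 : φ ∘ tup X (lvl f n)
      = {ω' : Ω | gvtx f hf X n ω' = l}.indicator (fun _ => (1 : ℝ≥0∞)) := by
    funext ω
    by_cases h : tup X (lvl f n) ω ∈ B
    · have h' : ω ∈ {ω' : Ω | gvtx f hf X n ω' = l} := by rw [← hAB]; exact h
      simp only [Function.comp_apply, hφ, Set.indicator_of_mem h, Set.indicator_of_mem h']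
    · have h' : ω ∉ {ω' : Ω | gvtx f hf X n ω' = l} := by rw [← hAB]; exact h
      simp only [Function.comp_apply, hφ, Set.indicator_of_notMem h,
        Set.indicator_of_notMem h']
  have heq2 : ψ ∘ tup X T = fun ω => ENNReal.ofReal (minc f hf X n l ω) := by
    funext ω
    simp only [Function.comp_apply, hψ, minc]
    congr 1
    exact Finset.inf'_congr _ rfl fun j hj => by simp [tup, Finset.mem_range.1 hj]
  have hprod := lintegral_mul_eq_lintegral_mul_lintegral_of_indepFun
    (hφm.comp (measurable_tup X hmeas (lvl f n))) (hψm.comp (measurable_tup X hmeas T))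
    hIndep
  have hmain : ∫⁻ ω, (φ ∘ tup X (lvl f n)) ω * (ψ ∘ tup X T) ω ∂ℙ
      = (∫⁻ ω, (φ ∘ tup X (lvl f n)) ω ∂ℙ) * ∫⁻ ω, (ψ ∘ tup X T) ω ∂ℙ := hprod
  rw [heq1, heq2] at hmain
  rw [hmain]
  congr 1
  · have hAmeas : MeasurableSet {ω' : Ω | gvtx f hf X n ω' = l} :=
      (measurable_tup X hmeas (lvl f n)).comap_le _ (event_comap_measurable f hf X n l)
    exact lintegral_indicator_one hAmeas
  · exact lintegral_minc f hf X hmeas hindep hexp n l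

end ExplosionMain

/-- if `Σ 1/f(n) < ∞` then, with i.i.d. mean-1 exponential edge weights
`X(v)` on the spherically symmetric tree with growth function `f`, almost surely there
is an infinite path from the root with summable weights: an explosion occurs a.s. -/
theorem explosion_of_summable_inverse_growth
    {Ω : Type*} [MeasureSpace Ω] [IsProbabilityMeasure (ℙ : Measure Ω)]
    (f : ℕ → ℕ) (hf : ∀ n, 1 ≤ f n)
    (hsum : Summable fun n : ℕ => ((f (n + 1) : ℝ))⁻¹)
    (X : List ℕ → Ω → ℝ) (hmeas : ∀ v, Measurable (X v))
    (hindep : iIndepFun X ℙ)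
    (hexp : ∀ v, ∀ t : ℝ, 0 ≤ t → ℙ {ω | t < X v ω} = ENNReal.ofReal (Real.exp (-t))) :
    ∀ᵐ ω ∂ℙ, ∃ g : ℕ → ℕ, (∀ n, g n < f (n + 1)) ∧
      Summable fun n : ℕ => X ((List.range (n + 1)).map g) ω := by
  classical
  set A : ℕ → List ℕ → Set Ω := fun n l => {ω | gvtx f hf X n ω = l} with hA
  set F : ℕ → Ω → ℝ≥0∞ := fun n ω => ∑ l ∈ sphA f n,
      (A n l).indicator (fun _ => (1 : ℝ≥0∞)) ω * ENNReal.ofReal (minc f hf X n l ω)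
    with hFdef
  have hAmeas : ∀ n l, MeasurableSet (A n l) := fun n l =>
    (measurable_tup X hmeas (lvl f n)).comap_le _ (event_comap_measurable f hf X n l)
  have htermmeas : ∀ n l, Measurable fun ω =>
      (A n l).indicator (fun _ => (1 : ℝ≥0∞)) ω * ENNReal.ofReal (minc f hf X n l ω) :=
    fun n l => (measurable_const.indicator (hAmeas n l)).mul
      (ENNReal.measurable_ofReal.comp (measurable_minc f hf X hmeas n l))
  have hFmeas : ∀ n, Measurable (F n) := fun n =>
    Finset.measurable_sum _ fun l _ => htermmeas n l
  have hFeq : ∀ n ω, F n ω = ENNReal.ofReal (X (gvtx f hf X (n + 1) ω) ω) := by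
    intro n ω
    rw [hFdef]
    dsimp only
    rw [Finset.sum_eq_single_of_mem (gvtx f hf X n ω) (gvtx_mem f hf X n ω)
      (fun l _ hne => by
        rw [Set.indicator_of_notMem (show ω ∉ A n l from fun h => hne (Eq.symm h)),
          zero_mul])]
    rw [Set.indicator_of_mem (show ω ∈ A n (gvtx f hf X n ω) from rfl), one_mul,
      ← gvtx_weight_eq_minc]
  have hFint : ∀ n, ∫⁻ ω, F n ω ∂ℙ = ENNReal.ofReal ((f (n + 1) : ℝ)⁻¹) := by
    intro n
    rw [hFdef]
    dsimp only
    rw [lintegral_finset_sum _ fun l _ => htermmeas n l]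
    have hcongr : ∀ l ∈ sphA f n,
        ∫⁻ ω, (A n l).indicator (fun _ => (1 : ℝ≥0∞)) ω
            * ENNReal.ofReal (minc f hf X n l ω) ∂ℙ
          = ℙ (A n l) * ENNReal.ofReal ((f (n + 1) : ℝ)⁻¹) :=
      fun l hl => lintegral_indicator_minc f hf X hmeas hindep hexp n l hl
    rw [Finset.sum_congr rfl hcongr, ← Finset.sum_mul]
    have hone : ∑ l ∈ sphA f n, ℙ (A n l) = 1 := by
      have hdisjA : (↑(sphA f n) : Set (List ℕ)).PairwiseDisjoint (A n) := by
        intro l _ l' _ hne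
        rw [Function.onFun, Set.disjoint_left]
        intro ω h1 h2
        exact hne ((show gvtx f hf X n ω = l from h1).symm.trans
          (show gvtx f hf X n ω = l' from h2))
      rw [← measure_biUnion_finset hdisjA fun l _ => hAmeas n l]
      have huniv : ⋃ l ∈ sphA f n, A n l = Set.univ := by
        ext ω
        simp only [Set.mem_iUnion, Set.mem_univ, iff_true, exists_prop]
        exact ⟨gvtx f hf X n ω, gvtx_mem f hf X n ω, rfl⟩
      rw [huniv, measure_univ]
    rw [hone, one_mul]
  have htsum : ∫⁻ ω, ∑' n, F n ω ∂ℙ = ∑' n, ENNReal.ofReal ((f (n + 1) : ℝ)⁻¹) := by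
    rw [lintegral_tsum fun n => (hFmeas n).aemeasurable]
    exact tsum_congr hFint
  have hfin : ∑' n, ENNReal.ofReal ((f (n + 1) : ℝ)⁻¹) < ⊤ := by
    rw [← ENNReal.ofReal_tsum_of_nonneg (fun n => by positivity) hsum]
    exact ENNReal.ofReal_lt_top
  have hae : ∀ᵐ ω ∂(ℙ : Measure Ω), ∑' n, F n ω < ⊤ := by
    refine ae_lt_top (by exact Measurable.ennreal_tsum hFmeas) ?_
    rw [htsum]
    exact hfin.ne
  have haeX : ∀ᵐ ω ∂(ℙ : Measure Ω), ∀ v : List ℕ, 0 ≤ X v ω :=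
    ae_all_iff.2 fun v => ae_nonneg_X (X := X) hmeas hexp v
  filter_upwards [hae, haeX] with ω h1 h2
  refine ⟨fun n => gsel f hf X n ω, fun n => selIdx_lt _ _ _, ?_⟩
  have hpath : ∀ n, (List.range (n + 1)).map (fun k => gsel f hf X k ω)
      = gvtx f hf X (n + 1) ω := fun n => (gvtx_eq_map f hf X ω (n + 1)).symm
  have hsummable : Summable fun n => (ENNReal.ofReal (X (gvtx f hf X (n + 1) ω) ω)).toReal := by
    apply ENNReal.summable_toReal
    have : ∑' n, ENNReal.ofReal (X (gvtx f hf X (n + 1) ω) ω) = ∑' n, F n ω :=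
      tsum_congr fun n => (hFeq n ω).symm
    rw [this]
    exact h1.ne
  refine hsummable.congr fun n => ?_
  rw [ENNReal.toReal_ofReal (h2 _), hpath n]
end
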